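/- For all integers 1 ≤ ℓ ≤ n one has 2^{ℓ/2} · Γ_ℓ((n+1)/2) / Γ_ℓ(n/2) = (n!/(n−ℓ)!) · κ_n / ((2π)^{ℓ/2} · κ_{n−ℓ}), where κ_m := π^{m/2} / Γ(1 + m/2) is the volume of the unit ball in ℝ^m (with κ_0 = 1). -/

import Mathlib

noncomputable section

/-- The multivariate Gamma function `Γ_ℓ(a) = π^{ℓ(ℓ-1)/4} ∏_{i=1}^{ℓ} Γ(a - (i-1)/2)`. -/
def multivariateGamma (ℓ : ℕ) (a : ℝ) : ℝ :=
  Real.pi ^ ((ℓ : ℝ) * ((ℓ : ℝ) - 1) / 4) *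
    ∏ i ∈ Finset.range ℓ, Real.Gamma (a - (i : ℝ) / 2)

/-- `κ_m = π^{m/2} / Γ(1 + m/2)`, the volume of the unit ball in `ℝ^m`. -/
def unitBallVolume (m : ℕ) : ℝ :=
  Real.pi ^ ((m : ℝ) / 2) / Real.Gamma (1 + (m : ℝ) / 2)

/-!
Shifting `a` by `1/2` shifts the index of the product defining `Γ_ℓ(a)` by one, so
`Γ_ℓ((n+1)/2) / Γ_ℓ(n/2)` telescopes to `Γ((n+1)/2) / Γ((n-ℓ+1)/2)`. Legendre's duplication
formula `Γ((m+1)/2) Γ(1+m/2) = 2^{-m} √π m!` rewrites `κ_m` as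
`2^m π^{m/2} Γ((m+1)/2) / (m! √π)`, after which both sides are the same product of powers.
-/

open Real

lemma Gamma_add_one_div_two_mul_Gamma_one_add_div_two (m : ℕ) :
    Gamma (((m : ℝ) + 1) / 2) * Gamma (1 + (m : ℝ) / 2) * 2 ^ m = m.factorial * √π := by
  have h := Gamma_mul_Gamma_add_half (((m : ℝ) + 1) / 2)
  rw [show ((m : ℝ) + 1) / 2 + 1 / 2 = 1 + (m : ℝ) / 2 by ring,
    show 2 * (((m : ℝ) + 1) / 2) = m + 1 by ring,
    show 1 - ((m : ℝ) + 1) = -(m : ℝ) by ring, Gamma_nat_eq_factorial,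
    rpow_neg zero_le_two, rpow_natCast] at h
  rw [h]
  field_simp

lemma unitBallVolume_eq_Gamma_add_one_div_two (m : ℕ) :
    unitBallVolume m
      = 2 ^ m * π ^ ((m : ℝ) / 2) * Gamma (((m : ℝ) + 1) / 2) / (m.factorial * √π) := by
  have hΓ : Gamma (1 + (m : ℝ) / 2) ≠ 0 := (Gamma_pos_of_pos (by positivity)).ne'
  have hfac : (m.factorial : ℝ) ≠ 0 := mod_cast m.factorial_ne_zero
  have hsqrt : √π ≠ 0 := (sqrt_pos.mpr pi_pos).ne'
  rw [unitBallVolume, div_eq_div_iff hΓ (mul_ne_zero hfac hsqrt)]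
  linear_combination -π ^ ((m : ℝ) / 2) * Gamma_add_one_div_two_mul_Gamma_one_add_div_two m

lemma multivariateGamma_add_half_mul (ℓ : ℕ) (a : ℝ) :
    multivariateGamma ℓ (a + 1 / 2) * Gamma (a + 1 / 2 - ℓ / 2)
      = Gamma (a + 1 / 2) * multivariateGamma ℓ a := by
  have shift : ∀ i : ℕ, Gamma (a + 1 / 2 - ((i + 1 : ℕ) : ℝ) / 2) = Gamma (a - (i : ℝ) / 2) := by
    intro i; push_cast; ring_nf
  simp only [multivariateGamma]
  rw [mul_assoc, ← Finset.prod_range_succ, Finset.prod_range_succ',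
    Finset.prod_congr rfl fun i _ => shift i]
  simp only [CharP.cast_eq_zero, zero_div, sub_zero]
  ring

lemma multivariateGamma_pos (ℓ : ℕ) {a : ℝ} (ha : ((ℓ : ℝ) - 1) / 2 < a) :
    0 < multivariateGamma ℓ a := by
  refine mul_pos (rpow_pos_of_pos pi_pos _) (Finset.prod_pos fun i hi => Gamma_pos_of_pos ?_)
  have : (i : ℝ) + 1 ≤ ℓ := by exact_mod_cast Finset.mem_range.mp hi
  linarith

lemma two_pow_add_mul_pi_rpow (m ℓ : ℕ) :
    (2 : ℝ) ^ (m + ℓ) * π ^ (((m + ℓ : ℕ) : ℝ) / 2)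
      = 2 ^ ((ℓ : ℝ) / 2) * (2 * π) ^ ((ℓ : ℝ) / 2) * (2 ^ m * π ^ ((m : ℝ) / 2)) := by
  have h2 : (2 : ℝ) ^ ℓ = 2 ^ ((ℓ : ℝ) / 2) * 2 ^ ((ℓ : ℝ) / 2) := by
    rw [← rpow_add two_pos, add_halves, rpow_natCast]
  rw [mul_rpow zero_le_two pi_pos.le, Nat.cast_add, add_div, rpow_add pi_pos, pow_add, h2]
  ring

theorem statement_3_general (ℓ n : ℕ) (hn : ℓ ≤ n) :
    (2 : ℝ) ^ ((ℓ : ℝ) / 2) * multivariateGamma ℓ (((n : ℝ) + 1) / 2)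
        / multivariateGamma ℓ ((n : ℝ) / 2)
      = ((n.factorial : ℝ) / ((n - ℓ).factorial : ℝ)) * unitBallVolume n
          / ((2 * Real.pi) ^ ((ℓ : ℝ) / 2) * unitBallVolume (n - ℓ)) := by
  obtain ⟨m, rfl⟩ := Nat.exists_eq_add_of_le' hn
  rw [Nat.add_sub_cancel]
  set a : ℝ := ((m + ℓ : ℕ) : ℝ) / 2
  have hshift : a + 1 / 2 - ℓ / 2 = ((m : ℝ) + 1) / 2 := by simp only [a]; push_cast; ring
  have hratio := multivariateGamma_add_half_mul ℓ a
  rw [hshift] at hratio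
  have hΓ_pos : 0 < Gamma (((m : ℝ) + 1) / 2) := Gamma_pos_of_pos (by positivity)
  have hΓℓ_pos : 0 < multivariateGamma ℓ a :=
    multivariateGamma_pos ℓ (by simp only [a]; push_cast; linarith [m.cast_nonneg (α := ℝ)])
  rw [unitBallVolume_eq_Gamma_add_one_div_two, unitBallVolume_eq_Gamma_add_one_div_two,
    two_pow_add_mul_pi_rpow, show (((m + ℓ : ℕ) : ℝ) + 1) / 2 = a + 1 / 2 by simp only [a]; ring,
    eq_div_of_mul_eq hΓ_pos.ne' hratio]
  have h2π_pos : 0 < (2 * π) ^ ((ℓ : ℝ) / 2) := by positivity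
  have hsqrt_pos : (0 : ℝ) < √π := sqrt_pos.mpr pi_pos
  field_simp

/-- For all integers `1 ≤ ℓ ≤ n`:
`2^{ℓ/2} Γ_ℓ((n+1)/2)/Γ_ℓ(n/2) = (n!/(n−ℓ)!) κ_n / ((2π)^{ℓ/2} κ_{n−ℓ})`. -/
theorem statement_3 (ℓ n : ℕ) (hℓ : 1 ≤ ℓ) (hn : ℓ ≤ n) :
    (2 : ℝ) ^ ((ℓ : ℝ) / 2) * multivariateGamma ℓ (((n : ℝ) + 1) / 2)
        / multivariateGamma ℓ ((n : ℝ) / 2)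
      = ((n.factorial : ℝ) / ((n - ℓ).factorial : ℝ)) * unitBallVolume n
          / ((2 * Real.pi) ^ ((ℓ : ℝ) / 2) * unitBallVolume (n - ℓ)) :=
  statement_3_general ℓ n hn
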